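/- arXiv:2103.10871 — 4 statements merged into one kernel-verified Lean document; each statement's English description precedes it below -/
import Mathlib

section
/- For every integer n ≥ 1, the graph Y_n, formed from the disjoint union of one copy of the cycle C_4 and one copy of the path P_n by adding an edge joining a vertex of the C_4 to an endpoint of the P_n, satisfies χρ(Y_n) = 3. -/
open SimpleGraph

/-- A `k`-packing coloring of `G`: colors in `{1,…,k}` and distinct vertices of equal color `i`
are at (extended, shortest-path) distance greater than `i`. -/
def IsPackingColoring {V : Type*} (G : SimpleGraph V) (k : ℕ) (c : V → ℕ) : Prop :=
  (∀ v, 1 ≤ c v ∧ c v ≤ k) ∧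
    ∀ u v : V, u ≠ v → c u = c v → (c u : ℕ∞) < G.edist u v

/-- The packing chromatic number of `G`: the least `k` admitting a `k`-packing coloring. -/
noncomputable def packingChromaticNumber {V : Type*} (G : SimpleGraph V) : ℕ :=
  sInf {k | ∃ c : V → ℕ, IsPackingColoring G k c}

/-- `G` is `4`-`χρ`-vertex-critical: `χρ(G) = 4` and deleting any vertex drops `χρ` below `4`. -/
def FourVertexCritical {V : Type*} (G : SimpleGraph V) : Prop :=
  packingChromaticNumber G = 4 ∧
    ∀ v : V, packingChromaticNumber (G.induce ({v}ᶜ : Set V)) < 4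

/-- `G` contains a (not necessarily induced) subgraph isomorphic to `H`. -/
def HasCopy {W V : Type*} (H : SimpleGraph W) (G : SimpleGraph V) : Prop :=
  ∃ f : H →g G, Function.Injective f

/-- The cycle on `n` vertices (for `n ≥ 3`). -/
def CycGraph (n : ℕ) : SimpleGraph (Fin n) :=
  SimpleGraph.fromRel (fun i j => (i.val + 1) % n = j.val)

/-- `Y n`: 4-cycle `0-1-2-3-0` with vertex `3` joined to the endpoint `4`
of the path `4-5-…-(n+3)` on `n` vertices. -/
def Ygraph (n : ℕ) : SimpleGraph (Fin (n + 4)) :=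
  SimpleGraph.fromRel (fun i j => j.val = i.val + 1 ∨ (i.val = 0 ∧ j.val = 3))

section Helpers
variable {n : ℕ}

lemma ygraph_adj_val {u v : Fin (n+4)} (h : (Ygraph n).Adj u v) :
    v.val = u.val + 1 ∨ u.val = v.val + 1 ∨ (u.val = 0 ∧ v.val = 3) ∨ (v.val = 0 ∧ u.val = 3) := by
  simp only [Ygraph, fromRel_adj] at h
  tauto

lemma ygraph_adj_of_succ {u v : Fin (n+4)} (h : v.val = u.val + 1) :
    (Ygraph n).Adj u v := by
  simp only [Ygraph, fromRel_adj]
  exact ⟨fun he => by simp [he] at h, Or.inl (Or.inl h)⟩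

lemma ygraph_adj_03 : (Ygraph n).Adj ⟨0, by omega⟩ ⟨3, by omega⟩ := by
  simp only [Ygraph, fromRel_adj, ne_eq, Fin.mk.injEq]
  tauto

lemma ygraph_walk_parity {u v : Fin (n+4)} (p : (Ygraph n).Walk u v) :
    (u.val + p.length) % 2 = v.val % 2 := by
  induction p with
  | nil => simp
  | cons h q ih =>
    have := ygraph_adj_val h
    simp only [Walk.length_cons] at *
    omega

lemma lt_edist' {V : Type*} {G : SimpleGraph V} {u v : V} {k : ℕ}
    (h : ∀ p : G.Walk u v, k < p.length) : (k : ℕ∞) < G.edist u v := by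
  have h1 : ((k+1 : ℕ) : ℕ∞) ≤ G.edist u v := by
    rw [SimpleGraph.edist_eq_sInf]
    apply le_sInf
    rintro x ⟨p, rfl⟩
    show ((k+1 : ℕ) : ℕ∞) ≤ (p.length : ℕ∞)
    exact_mod_cast h p
  calc (k:ℕ∞) < ((k+1:ℕ):ℕ∞) := by exact_mod_cast Nat.lt_succ_self k
  _ ≤ _ := h1

end Helpers

theorem packingChromaticNumber_Ygraph (n : ℕ) (hn : 1 ≤ n) :
    packingChromaticNumber (Ygraph n) = 3 := by
  have h3mem : ∃ c : Fin (n+4) → ℕ, IsPackingColoring (Ygraph n) 3 c := by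
    refine ⟨fun v => if v.val % 2 = 0 then 1 else if v.val % 4 = 1 then 2 else 3, ?_, ?_⟩
    · intro v
      dsimp only
      split_ifs <;> omega
    · intro u v hne hc
      have hnv : u.val ≠ v.val := fun h => hne (Fin.ext h)
      dsimp only at hc ⊢
      split_ifs at hc ⊢ with hu1 hv1 hv2 hu2 hv3 hv4 hv5 hv6 <;> try omega
      · -- both even, color 1
        apply lt_edist'
        intro p
        by_contra hl
        push_neg at hl
        have hpar := ygraph_walk_parity p
        have hl0 : p.length = 0 := by omega
        exact hne (Walk.eq_of_length_eq_zero hl0)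
      · -- both ≡ 1 mod 4, color 2
        apply lt_edist'
        intro p
        by_contra hl
        push_neg at hl
        cases p with
        | nil => exact hne rfl
        | cons h q =>
          cases q with
          | nil => have := ygraph_adj_val h; omega
          | cons h' q' =>
            have hq0 : q'.length = 0 := by
              simp only [Walk.length_cons] at hl; omega
            have hw := Walk.eq_of_length_eq_zero hq0
            subst hw
            have h1 := ygraph_adj_val h
            have h2 := ygraph_adj_val h'
            omega
      · -- both ≡ 3 mod 4, color 3
        apply lt_edist'
        intro p
        by_contra hl
        push_neg at hl
        cases p with
        | nil => exact hne rfl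
        | cons h q =>
          cases q with
          | nil => have := ygraph_adj_val h; omega
          | cons h' q' =>
            cases q' with
            | nil =>
              have h1 := ygraph_adj_val h
              have h2 := ygraph_adj_val h'
              omega
            | cons h'' q'' =>
              have hq0 : q''.length = 0 := by
                simp only [Walk.length_cons] at hl; omega
              have hw := Walk.eq_of_length_eq_zero hq0
              subst hw
              have h1 := ygraph_adj_val h
              have h2 := ygraph_adj_val h'
              have h3 := ygraph_adj_val h''
              omega
  have hlow : ∀ k ∈ {k | ∃ c : Fin (n+4) → ℕ, IsPackingColoring (Ygraph n) k c}, 3 ≤ k := by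
    rintro k ⟨c, hc1, hc2⟩
    by_contra hk
    push_neg at hk
    set v0 : Fin (n+4) := ⟨0, by omega⟩ with hv0
    set v1 : Fin (n+4) := ⟨1, by omega⟩ with hv1
    set v2 : Fin (n+4) := ⟨2, by omega⟩ with hv2
    set v3 : Fin (n+4) := ⟨3, by omega⟩ with hv3
    have hb : ∀ v, c v = 1 ∨ c v = 2 := fun v => by have := hc1 v; omega
    have a01 : (Ygraph n).Adj v0 v1 := ygraph_adj_of_succ rfl
    have a12 : (Ygraph n).Adj v1 v2 := ygraph_adj_of_succ rfl
    have a23 : (Ygraph n).Adj v2 v3 := ygraph_adj_of_succ rfl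
    have a03 : (Ygraph n).Adj v0 v3 := ygraph_adj_03
    have no1 : ∀ u v : Fin (n+4), (Ygraph n).Adj u v → c u = 1 → c v = 1 → False := by
      intro u v ha h1 h2
      have hlt := hc2 u v ha.ne (h1.trans h2.symm)
      rw [h1] at hlt
      have hle : (Ygraph n).edist u v ≤ 1 := by
        simpa using SimpleGraph.edist_le ha.toWalk
      have := hlt.trans_le hle
      simp at this
    have no2 : ∀ u v : Fin (n+4), u ≠ v → (Ygraph n).edist u v ≤ 2 → c u = 2 → c v = 2 → False := by
      intro u v hne hle h1 h2
      have hlt := hc2 u v hne (h1.trans h2.symm)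
      rw [h1] at hlt
      have := hlt.trans_le hle
      simp at this
    have e02 : (Ygraph n).edist v0 v2 ≤ 2 := by
      simpa using SimpleGraph.edist_le (Walk.cons a01 a12.toWalk)
    have e13 : (Ygraph n).edist v1 v3 ≤ 2 := by
      simpa using SimpleGraph.edist_le (Walk.cons a12 a23.toWalk)
    have le2 : ∀ {u v : Fin (n+4)}, (Ygraph n).Adj u v → (Ygraph n).edist u v ≤ 2 := by
      intro u v ha
      calc (Ygraph n).edist u v ≤ 1 := by simpa using SimpleGraph.edist_le ha.toWalk
      _ ≤ 2 := by norm_num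
    have ne02 : v0 ≠ v2 := by simp [hv0, hv2, Fin.ext_iff]
    have ne13 : v1 ≠ v3 := by simp [hv1, hv3, Fin.ext_iff]
    rcases hb v0 with h0|h0 <;> rcases hb v1 with h1|h1 <;>
      rcases hb v2 with h2|h2 <;> rcases hb v3 with h3|h3 <;>
      first
      | exact no1 v0 v1 a01 h0 h1
      | exact no1 v1 v2 a12 h1 h2
      | exact no1 v2 v3 a23 h2 h3
      | exact no1 v0 v3 a03 h0 h3
      | exact no2 v0 v1 a01.ne (le2 a01) h0 h1
      | exact no2 v0 v2 ne02 e02 h0 h2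
      | exact no2 v0 v3 a03.ne (le2 a03) h0 h3
      | exact no2 v1 v2 a12.ne (le2 a12) h1 h2
      | exact no2 v1 v3 ne13 e13 h1 h3
      | exact no2 v2 v3 a23.ne (le2 a23) h2 h3
  refine le_antisymm (Nat.sInf_le h3mem) (le_csInf ⟨3, h3mem⟩ hlow)
end

section
/- Let G be a finite simple graph containing no subgraph isomorphic to a cycle C_n with n ≥ 4 and n not divisible by 4. Fix a vertex u of G, and for each i ≥ 1 let N_i be the set of vertices at distance exactly i from u. Then for any i ≥ 1 and any two vertices a, b ∈ N_i, if the pair ab is not an edge of some subgraph of G isomorphic to K_3 (a triangle), then ab is not an edge of G. -/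
open SimpleGraph

private lemma path_getVert_inj' {V : Type*} {G : SimpleGraph V} {u v : V} {p : G.Walk u v}
    (hp : p.IsPath) : ∀ {m n : ℕ}, m ≤ p.length → n ≤ p.length →
      p.getVert m = p.getVert n → m = n := by
  induction p with
  | nil => intro m n hm hn _; simp at hm hn; omega
  | @cons u' v' w' h q ih =>
    intro m n hm hn heq
    have hq : q.IsPath := hp.of_cons
    have hu : u' ∉ q.support := ((SimpleGraph.Walk.cons_isPath_iff h q).mp hp).2
    match m, n with
    | 0, 0 => rfl
    | 0, n+1 =>
      exfalso
      apply hu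
      rw [SimpleGraph.Walk.mem_support_iff_exists_getVert]
      refine ⟨n, ?_, by simpa using hn⟩
      simpa [SimpleGraph.Walk.getVert_cons_succ] using heq.symm
    | m+1, 0 =>
      exfalso
      apply hu
      rw [SimpleGraph.Walk.mem_support_iff_exists_getVert]
      refine ⟨m, ?_, by simpa using hm⟩
      simpa [SimpleGraph.Walk.getVert_cons_succ] using heq
    | m+1, n+1 =>
      have := ih hq (by simpa using hm) (by simpa using hn)
        (by simpa [SimpleGraph.Walk.getVert_cons_succ] using heq)
      omega

private lemma geodesic_split' {V : Type*} [DecidableEq V] {G : SimpleGraph V} {u a x : V}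
    (p : G.Walk u a) (hlen : p.length = G.dist u a) (hx : x ∈ p.support) :
    (p.takeUntil x hx).length = G.dist u x ∧ (p.dropUntil x hx).length = G.dist x a ∧
      G.dist u x + G.dist x a = G.dist u a := by
  have h1 : G.dist u x ≤ (p.takeUntil x hx).length := SimpleGraph.dist_le _
  have h2 : G.dist x a ≤ (p.dropUntil x hx).length := SimpleGraph.dist_le _
  have hsum : (p.takeUntil x hx).length + (p.dropUntil x hx).length = p.length := by
    conv_rhs => rw [← p.take_spec hx]
    rw [SimpleGraph.Walk.length_append]
  have hrx : G.Reachable u x := ⟨p.takeUntil x hx⟩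
  have hrxa : G.Reachable x a := ⟨p.dropUntil x hx⟩
  obtain ⟨w1, hw1⟩ := hrx.exists_walk_length_eq_dist
  obtain ⟨w2, hw2⟩ := hrxa.exists_walk_length_eq_dist
  have h3 : G.dist u a ≤ G.dist u x + G.dist x a := by
    calc G.dist u a ≤ (w1.append w2).length := SimpleGraph.dist_le _
      _ = G.dist u x + G.dist x a := by rw [SimpleGraph.Walk.length_append, hw1, hw2]
  omega

theorem not_adj_of_eq_dist_of_not_triangle {V : Type*} [Fintype V] (G : SimpleGraph V)
    (hcyc : ∀ m : ℕ, 4 ≤ m → ¬ (4 ∣ m) → ¬ HasCopy (CycGraph m) G)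
    (u : V) (i : ℕ) (hi : 1 ≤ i) (a b : V)
    (ha : G.edist u a = i) (hb : G.edist u b = i)
    (htri : ¬ ∃ c : V, G.Adj a c ∧ G.Adj c b ∧ G.Adj a b) :
    ¬ G.Adj a b := by
  intro hab
  classical
  have hra : G.Reachable u a := SimpleGraph.edist_ne_top_iff_reachable.mp (by rw [ha]; simp)
  have hrb : G.Reachable u b := SimpleGraph.edist_ne_top_iff_reachable.mp (by rw [hb]; simp)
  have hda : G.dist u a = i := by simp [SimpleGraph.dist, ha]
  have hdb : G.dist u b = i := by simp [SimpleGraph.dist, hb]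
  obtain ⟨pa, hpaP, hpal⟩ := hra.exists_path_of_dist
  obtain ⟨pb, hpbP, hpbl⟩ := hrb.exists_path_of_dist
  rw [hda] at hpal
  rw [hdb] at hpbl
  obtain ⟨x, hxS, hxmax⟩ := Finset.exists_max_image
    (Finset.univ.filter (fun y => y ∈ pa.support ∧ y ∈ pb.support)) (fun y => G.dist u y)
    ⟨u, by simp⟩
  simp only [Finset.mem_filter, Finset.mem_univ, true_and] at hxS
  obtain ⟨hxa, hxb⟩ := hxS
  obtain ⟨hta, hla0, hsa⟩ := geodesic_split' pa (hpal.trans hda.symm) hxa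
  obtain ⟨htb, hlb0, hsb⟩ := geodesic_split' pb (hpbl.trans hdb.symm) hxb
  set qa := pa.dropUntil x hxa with hqa
  set qb := pb.dropUntil x hxb with hqb
  set ℓ := G.dist x a with hℓ
  set d := G.dist u x with hd
  have hla : qa.length = ℓ := hla0
  have hlb : qb.length = ℓ := by
    rw [hlb0]; omega
  have hqaP : qa.IsPath := hpaP.dropUntil hxa
  have hqbP : qb.IsPath := hpbP.dropUntil hxb
  -- ℓ ≥ 1
  have hℓ1 : 1 ≤ ℓ := by
    by_contra h
    have h0 : qa.length = 0 := by omega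
    have h0' : qb.length = 0 := by omega
    have hxa' : x = a := SimpleGraph.Walk.eq_of_length_eq_zero h0
    have hxb' : x = b := SimpleGraph.Walk.eq_of_length_eq_zero h0'
    exact hab.ne (hxa' ▸ hxb')
  -- disjointness
  have hdisj : ∀ y, y ∈ qa.support → y ∈ qb.support → y = x := by
    intro y hya hyb
    have hyA : y ∈ pa.support := pa.support_dropUntil_subset hxa hya
    have hyB : y ∈ pb.support := pb.support_dropUntil_subset hxb hyb
    have hymax : G.dist u y ≤ d := hxmax y (by simp [hyA, hyB])
    obtain ⟨hty, hdy, hsy⟩ := geodesic_split' qa hla0 hya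
    have h3 : G.dist u a ≤ G.dist u y + G.dist y a := by
      obtain ⟨w1, hw1⟩ := SimpleGraph.Reachable.exists_walk_length_eq_dist (⟨pa.takeUntil y hyA⟩ : G.Reachable u y)
      obtain ⟨w2, hw2⟩ := SimpleGraph.Reachable.exists_walk_length_eq_dist (⟨qa.dropUntil y hya⟩ : G.Reachable y a)
      calc G.dist u a ≤ (w1.append w2).length := SimpleGraph.dist_le _
        _ = G.dist u y + G.dist y a := by rw [SimpleGraph.Walk.length_append, hw1, hw2]
    have h0 : G.dist x y = 0 := by omega
    have hzero : (qa.takeUntil y hya).length = 0 := by rw [hty, h0]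
    exact (SimpleGraph.Walk.eq_of_length_eq_zero hzero).symm
  set m := 2 * ℓ + 1 with hm
  let g : ℕ → V := fun k => if k ≤ ℓ then qa.getVert k else qb.getVert (m - k)
  have hgdef : ∀ k, g k = if k ≤ ℓ then qa.getVert k else qb.getVert (m - k) := fun _ => rfl
  -- injectivity
  have hginj : ∀ k1 k2, k1 < m → k2 < m → g k1 = g k2 → k1 = k2 := by
    have key : ∀ k1 k2, k1 < m → k2 < m → k1 ≤ ℓ → g k1 = g k2 → k2 ≤ ℓ → k1 = k2 := by
      intro k1 k2 hk1 hk2 h1 heq h2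
      rw [hgdef, if_pos h1, hgdef, if_pos h2] at heq
      exact path_getVert_inj' hqaP (by omega) (by omega) heq
    have cross : ∀ k1 k2, k1 < m → k2 < m → k1 ≤ ℓ → ¬ k2 ≤ ℓ → g k1 = g k2 → False := by
      intro k1 k2 hk1 hk2 h1 h2 heq
      rw [hgdef, if_pos h1, hgdef, if_neg h2] at heq
      have hya : qa.getVert k1 ∈ qa.support :=
        SimpleGraph.Walk.mem_support_iff_exists_getVert.mpr ⟨k1, rfl, by omega⟩
      have hyb : qa.getVert k1 ∈ qb.support := by
        rw [heq]
        exact SimpleGraph.Walk.mem_support_iff_exists_getVert.mpr ⟨m - k2, rfl, by omega⟩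
      have hyx : qa.getVert k1 = x := hdisj _ hya hyb
      have : qb.getVert (m - k2) = qb.getVert 0 := by
        rw [← heq, hyx, qb.getVert_zero]
      have := path_getVert_inj' hqbP (by omega) (by omega) this
      omega
    intro k1 k2 hk1 hk2 heq
    by_cases h1 : k1 ≤ ℓ <;> by_cases h2 : k2 ≤ ℓ
    · exact key k1 k2 hk1 hk2 h1 heq h2
    · exact absurd heq (fun h => cross k1 k2 hk1 hk2 h1 h2 h)
    · exact absurd heq.symm (fun h => cross k2 k1 hk2 hk1 h2 h1 h)
    · rw [hgdef, if_neg h1, hgdef, if_neg h2] at heq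
      have := path_getVert_inj' hqbP (m := m - k1) (n := m - k2) (by omega) (by omega) heq
      omega
  -- adjacency along the cycle
  have hstep : ∀ k, k < m → G.Adj (g k) (g ((k + 1) % m)) := by
    intro k hk
    rcases Nat.lt_or_ge k ℓ with h1 | h1
    · have e2 : (k + 1) % m = k + 1 := Nat.mod_eq_of_lt (by omega)
      rw [hgdef, if_pos (by omega), e2, hgdef, if_pos (by omega)]
      exact qa.adj_getVert_succ (by omega)
    rcases Nat.lt_or_ge k (ℓ + 1) with h2 | h2
    · have hk' : k = ℓ := by omega
      have e2 : (k + 1) % m = ℓ + 1 := by rw [hk']; exact Nat.mod_eq_of_lt (by omega)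
      rw [e2, hgdef, if_pos (by omega), hgdef, if_neg (by omega), hk']
      have ea : qa.getVert ℓ = a := by rw [← hla]; exact qa.getVert_length
      have eb : qb.getVert (m - (ℓ + 1)) = b := by
        have : m - (ℓ + 1) = ℓ := by omega
        rw [this, ← hlb]; exact qb.getVert_length
      rw [ea, eb]; exact hab
    rcases Nat.lt_or_ge k (m - 1) with h3 | h3
    · have e2 : (k + 1) % m = k + 1 := Nat.mod_eq_of_lt (by omega)
      rw [e2, hgdef, if_neg (by omega), hgdef, if_neg (by omega)]
      have := qb.adj_getVert_succ (i := m - (k + 1)) (by omega)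
      have e4 : m - (k + 1) + 1 = m - k := by omega
      rw [e4] at this
      exact this.symm
    · have hk' : k = 2 * ℓ := by omega
      have e2 : (k + 1) % m = 0 := by rw [hk', hm]; simp
      rw [e2, hgdef, if_neg (by omega), hgdef, if_pos (by omega)]
      have e1 : m - k = 1 := by omega
      rw [e1, qa.getVert_zero]
      have h01 := qb.adj_getVert_succ (i := 0) (by omega)
      rw [qb.getVert_zero] at h01
      exact h01.symm
  -- case split on ℓ
  rcases Nat.lt_or_ge ℓ 2 with hℓ2 | hℓ2
  · -- ℓ = 1 : triangle
    have hℓ' : ℓ = 1 := by omega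
    have haxa : G.Adj x a := by
      have := qa.adj_getVert_succ (i := 0) (by omega)
      rwa [qa.getVert_zero, show (0 + 1 : ℕ) = qa.length by omega, qa.getVert_length] at this
    have haxb : G.Adj x b := by
      have := qb.adj_getVert_succ (i := 0) (by omega)
      rwa [qb.getVert_zero, show (0 + 1 : ℕ) = qb.length by omega, qb.getVert_length] at this
    exact htri ⟨x, haxa.symm, haxb, hab⟩
  · -- ℓ ≥ 2 : forbidden cycle
    refine hcyc m (by omega) (by omega) ⟨⟨fun k => g k.val, ?_⟩, ?_⟩
    · intro k1 k2 hk
      simp only [CycGraph, SimpleGraph.fromRel_adj] at hk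
      obtain ⟨hne, h | h⟩ := hk
      · have := hstep k1.val k1.isLt
        rwa [h] at this
      · have := hstep k2.val k2.isLt
        rw [h] at this
        exact this.symm
    · intro k1 k2 h
      exact Fin.ext (hginj _ _ k1.isLt k2.isLt h)
end

section
/- The graph H_1 is 4-χρ-vertex-critical; that is, χρ(H_1) = 4 and χρ(H_1 − v) < 4 for every vertex v of H_1. -/
open SimpleGraph

/-- `H₁`: vertices `a=0, b=1, c=2, d=3, e=4`; edges `ab, ad, bd, ae, de, bc`. -/
def H1graph : SimpleGraph (Fin 5) :=
  SimpleGraph.fromRel (fun i j =>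
    (i.val = 0 ∧ j.val = 1) ∨ (i.val = 0 ∧ j.val = 3) ∨ (i.val = 1 ∧ j.val = 3) ∨
      (i.val = 0 ∧ j.val = 4) ∨ (i.val = 3 ∧ j.val = 4) ∨ (i.val = 1 ∧ j.val = 2))


/-!
In any packing colouring the triangle `abd` receives three distinct colours, and two vertices
at distance `2` may share only the colour `1`. With colours `{1,2,3}`, `e` (adjacent to `a`, `d`)
must repeat the colour of `b`, and `c` (adjacent to `b`) must repeat the colour of `a` or `d`;
both repetitions are at distance `2`, so `b` and `c` would both get colour `1`, yet they are
adjacent. Explicit colourings give `χρ(H₁) ≤ 4` and `χρ(H₁ - v) ≤ 3`.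
-/

section PackingColoring

variable {V : Type*} {G : SimpleGraph V} {k : ℕ} {c : V → ℕ}

lemma IsPackingColoring.mono {k' : ℕ} (hc : IsPackingColoring G k c) (hk : k ≤ k') :
    IsPackingColoring G k' c :=
  ⟨fun v => ⟨(hc.1 v).1, (hc.1 v).2.trans hk⟩, hc.2⟩

lemma packingChromaticNumber_le (hc : IsPackingColoring G k c) : packingChromaticNumber G ≤ k :=
  Nat.sInf_le ⟨c, hc⟩

lemma packingChromaticNumber_le_iff (hG : ∃ k c, IsPackingColoring G k c) :
    packingChromaticNumber G ≤ k ↔ ∃ c, IsPackingColoring G k c := by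
  refine ⟨fun hk => ?_, fun ⟨_, hc⟩ => packingChromaticNumber_le hc⟩
  obtain ⟨c, hc⟩ := Nat.sInf_mem hG
  exact ⟨c, hc.mono hk⟩

lemma IsPackingColoring.lt_of_edist_le (hc : IsPackingColoring G k c) {u v : V} (huv : u ≠ v)
    (hcuv : c u = c v) {n : ℕ} (hn : G.edist u v ≤ n) : c u < n := by
  exact_mod_cast (hc.2 u v huv hcuv).trans_le hn

lemma IsPackingColoring.ne_of_adj (hc : IsPackingColoring G k c) {u v : V} (h : G.Adj u v) :
    c u ≠ c v := fun hcuv => by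
  have := hc.lt_of_edist_le h.ne hcuv (n := 1) (edist_eq_one_iff_adj.mpr h).le
  have := (hc.1 u).1
  omega

lemma IsPackingColoring.eq_one_of_adj_of_adj (hc : IsPackingColoring G k c) {u w v : V}
    (huv : u ≠ v) (huw : G.Adj u w) (hwv : G.Adj w v) (hcuv : c u = c v) : c u = 1 := by
  have := hc.lt_of_edist_le huv hcuv (n := 2) (huw.toWalk.append hwv.toWalk).edist_le
  have := (hc.1 u).1
  omega

lemma isPackingColoring_of_repeats_eq_one (hb : ∀ v, 1 ≤ c v ∧ c v ≤ k)
    (hrep : ∀ u v, u ≠ v → c u = c v → ¬ G.Adj u v ∧ c u = 1) :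
    IsPackingColoring G k c := by
  refine ⟨hb, fun u v huv hcuv => ?_⟩
  obtain ⟨hnadj, hone⟩ := hrep u v huv hcuv
  rw [hone, Nat.cast_one, ← not_le, edist_le_one_iff_adj_or_eq]
  tauto

lemma isPackingColoring_induce_of_repeats_eq_one (s : Set V)
    (hb : ∀ v ∈ s, 1 ≤ c v ∧ c v ≤ k)
    (hrep : ∀ u ∈ s, ∀ v ∈ s, u ≠ v → c u = c v → ¬ G.Adj u v ∧ c u = 1) :
    IsPackingColoring (G.induce s) k (fun v => c v) :=
  isPackingColoring_of_repeats_eq_one (fun v => hb v v.2)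
    (fun u v huv => hrep u u.2 v v.2 (Subtype.coe_ne_coe.mpr huv))

end PackingColoring

instance : DecidableRel H1graph.Adj := fun u v =>
  decidable_of_iff _ (fromRel_adj _ u v).symm

lemma H1graph_isPackingColoring_four : IsPackingColoring H1graph 4 ![2, 1, 3, 4, 1] :=
  isPackingColoring_of_repeats_eq_one (by decide) (by decide)

lemma H1graph_not_isPackingColoring_three (c : Fin 5 → ℕ) :
    ¬ IsPackingColoring H1graph 3 c := by
  intro hc
  have hab := hc.ne_of_adj (u := 0) (v := 1) (by decide)
  have had := hc.ne_of_adj (u := 0) (v := 3) (by decide)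
  have hbd := hc.ne_of_adj (u := 1) (v := 3) (by decide)
  have hae := hc.ne_of_adj (u := 0) (v := 4) (by decide)
  have hde := hc.ne_of_adj (u := 3) (v := 4) (by decide)
  have hbc := hc.ne_of_adj (u := 1) (v := 2) (by decide)
  have hbe := hc.eq_one_of_adj_of_adj (u := 1) (w := 0) (v := 4) (by decide)
    (by decide) (by decide)
  have hca := hc.eq_one_of_adj_of_adj (u := 2) (w := 1) (v := 0) (by decide)
    (by decide) (by decide)
  have hcd := hc.eq_one_of_adj_of_adj (u := 2) (w := 1) (v := 3) (by decide)
    (by decide) (by decide)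
  have := hc.1 0; have := hc.1 1; have := hc.1 2; have := hc.1 3; have := hc.1 4
  omega

lemma H1graph_induce_compl_singleton_isPackingColoring_three (w : Fin 5) :
    ∃ c, IsPackingColoring (H1graph.induce ({w}ᶜ : Set (Fin 5))) 3 c := by
  fin_cases w
  · exact ⟨_, isPackingColoring_induce_of_repeats_eq_one (c := ![1, 2, 1, 1, 3]) _
      (by decide) (by decide)⟩
  · exact ⟨_, isPackingColoring_induce_of_repeats_eq_one (c := ![1, 1, 1, 2, 3]) _
      (by decide) (by decide)⟩
  · exact ⟨_, isPackingColoring_induce_of_repeats_eq_one (c := ![2, 1, 1, 3, 1]) _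
      (by decide) (by decide)⟩
  · exact ⟨_, isPackingColoring_induce_of_repeats_eq_one (c := ![2, 1, 3, 1, 1]) _
      (by decide) (by decide)⟩
  · exact ⟨_, isPackingColoring_induce_of_repeats_eq_one (c := ![2, 3, 1, 1, 1]) _
      (by decide) (by decide)⟩

theorem H1_fourVertexCritical : FourVertexCritical H1graph := by
  have h4 : ∃ k c, IsPackingColoring H1graph k c := ⟨4, _, H1graph_isPackingColoring_four⟩
  refine ⟨le_antisymm ?_ ?_, fun w => ?_⟩
  · exact packingChromaticNumber_le H1graph_isPackingColoring_four
  · by_contra! h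
    obtain ⟨c, hc⟩ := (packingChromaticNumber_le_iff h4).mp (Nat.le_of_lt_succ h)
    exact H1graph_not_isPackingColoring_three c hc
  · obtain ⟨c, hc⟩ := H1graph_induce_compl_singleton_isPackingColoring_three w
    exact Nat.lt_succ_of_le (packingChromaticNumber_le hc)
end

section
/- Let n ≥ 4 and let H be the graph obtained from the cycle C_n by attaching one new pendant leaf to each of two vertices of the cycle whose distance in C_n is odd (equal to 2k+1 for some k ≥ 0). Then χρ(H) ≥ 4. -/
open SimpleGraph

/-- The graph obtained from the cycle `C_n` on vertices `0,…,n-1` by attaching a pendant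
leaf `n` to the cycle vertex `0` and a pendant leaf `n+1` to the cycle vertex `d`. -/
def CyclePlusTwoLeaves (n d : ℕ) : SimpleGraph (Fin (n + 2)) :=
  SimpleGraph.fromRel (fun i j =>
    (i.val < n ∧ j.val < n ∧ (i.val + 1) % n = j.val) ∨
      (i.val = 0 ∧ j.val = n) ∨ (i.val = d ∧ j.val = n + 1))

def cyc (n m : ℕ) : Fin (n + 2) :=
  if h : 0 < n then ⟨m % n, lt_of_lt_of_le (Nat.mod_lt _ h) (by omega)⟩ else ⟨0, by omega⟩

lemma cyc_val {n : ℕ} (h : 0 < n) (m : ℕ) : (cyc n m).val = m % n := by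
  simp [cyc, h]

lemma cyc_add_n {n : ℕ} (h : 0 < n) (m : ℕ) : cyc n (m + n) = cyc n m := by
  apply Fin.ext; rw [cyc_val h, cyc_val h, Nat.add_mod_right]

lemma cyc_ne {n : ℕ} (h : 0 < n) {m t : ℕ} (ht : 0 < t) (htn : t < n) :
    cyc n m ≠ cyc n (m + t) := by
  intro hh
  have h2 : m % n = (m + t) % n := by
    have := congrArg Fin.val hh; rwa [cyc_val h, cyc_val h] at this
  have h3 : (m + t) % n = (m + 0) % n := by simpa using h2.symm
  have h4 := Nat.ModEq.add_left_cancel' m h3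
  have h5 : t % n = 0 := by simpa [Nat.ModEq] using h4
  rw [Nat.mod_eq_of_lt htn] at h5; omega

lemma cyc_adj {n d : ℕ} (hn : 2 ≤ n) (m : ℕ) :
    (CyclePlusTwoLeaves n d).Adj (cyc n m) (cyc n (m + 1)) := by
  have h : 0 < n := by omega
  rw [CyclePlusTwoLeaves, fromRel_adj]
  refine ⟨cyc_ne h one_pos (by omega), Or.inl (Or.inl ?_)⟩
  simp only [cyc_val h]
  exact ⟨Nat.mod_lt _ h, Nat.mod_lt _ h, Nat.mod_add_mod m n 1⟩

lemma cyc_edist {n d : ℕ} (hn : 2 ≤ n) (t m : ℕ) :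
    (CyclePlusTwoLeaves n d).edist (cyc n m) (cyc n (m + t)) ≤ t := by
  induction t with
  | zero => simp
  | succ t ih =>
    calc (CyclePlusTwoLeaves n d).edist (cyc n m) (cyc n (m + (t+1)))
        ≤ (CyclePlusTwoLeaves n d).edist (cyc n m) (cyc n (m + t)) +
          (CyclePlusTwoLeaves n d).edist (cyc n (m + t)) (cyc n (m + t + 1)) :=
          SimpleGraph.edist_triangle
      _ ≤ (t : ℕ∞) + 1 := by
          refine add_le_add ih ?_
          exact le_of_eq (edist_eq_one_iff_adj.mpr (cyc_adj hn _))
      _ = ((t + 1 : ℕ) : ℕ∞) := by push_cast; ring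

lemma leaf0_adj {n d : ℕ} (hn : 2 ≤ n) :
    (CyclePlusTwoLeaves n d).Adj ⟨n, by omega⟩ (cyc n 0) := by
  have h : 0 < n := by omega
  rw [CyclePlusTwoLeaves, fromRel_adj]
  constructor
  · intro hh; have := congrArg Fin.val hh; rw [cyc_val h] at this
    simp only [Nat.zero_mod] at this; omega
  · right; right; left
    simp [cyc_val h]

lemma leaf1_adj {n d : ℕ} (hn : 2 ≤ n) (hdn : d < n) :
    (CyclePlusTwoLeaves n d).Adj ⟨n + 1, by omega⟩ (cyc n d) := by
  have h : 0 < n := by omega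
  rw [CyclePlusTwoLeaves, fromRel_adj]
  constructor
  · intro hh; have := congrArg Fin.val hh; rw [cyc_val h] at this
    simp only [Nat.mod_eq_of_lt hdn] at this; omega
  · right; right; right
    simp [cyc_val h, Nat.mod_eq_of_lt hdn]

lemma no_three (n d : ℕ) (hn : 4 ≤ n) (hd1 : 1 ≤ d) (hdn : d < n) (hodd : Odd (min d (n - d)))
    (c : Fin (n + 2) → ℕ) (hcol : ∀ v, 1 ≤ c v ∧ c v ≤ 3)
    (hpack : ∀ u v, u ≠ v → c u = c v → ((c u : ℕ∞) < (CyclePlusTwoLeaves n d).edist u v)) :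
    False := by
  have h0 : 0 < n := by omega
  have hn2 : 2 ≤ n := by omega
  have hkey : ∀ (u v : Fin (n + 2)) (a t : ℕ), u ≠ v →
      (CyclePlusTwoLeaves n d).edist u v ≤ (t : ℕ∞) → c u = a → c v = a → t ≤ a → False := by
    intro u v a t hne hed hu hv hta
    have h1 := hpack u v hne (by rw [hu, hv])
    rw [hu] at h1
    have h2 : (a : ℕ∞) < (t : ℕ∞) := lt_of_lt_of_le h1 hed
    exact absurd (Nat.cast_lt.mp h2) (by omega)
  -- (A'): pattern _,_,2,3 impossible
  have hA' : ∀ j : ℕ, c (cyc n (j + 2)) = 2 → c (cyc n (j + 3)) = 3 → False := by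
    intro j h2 h3
    have e1 : c (cyc n (j + 1)) ≠ 2 := fun h =>
      hkey _ _ 2 1 (cyc_ne h0 one_pos (by omega)) (cyc_edist hn2 1 (j + 1)) h h2 (by omega)
    have e2 : c (cyc n (j + 1)) ≠ 3 := fun h =>
      hkey _ _ 3 2 (cyc_ne h0 two_pos (by omega)) (cyc_edist hn2 2 (j + 1)) h h3 (by omega)
    have e0 : c (cyc n (j + 1)) = 1 := by have := hcol (cyc n (j + 1)); omega
    have g1 : c (cyc n j) ≠ 1 := fun h =>
      hkey _ _ 1 1 (cyc_ne h0 one_pos (by omega)) (cyc_edist hn2 1 j) h e0 le_rfl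
    have g2 : c (cyc n j) ≠ 2 := fun h =>
      hkey _ _ 2 2 (cyc_ne h0 two_pos (by omega)) (cyc_edist hn2 2 j) h h2 le_rfl
    have g3 : c (cyc n j) ≠ 3 := fun h =>
      hkey _ _ 3 3 (cyc_ne h0 (by omega) (by omega)) (cyc_edist hn2 3 j) h h3 le_rfl
    have := hcol (cyc n j); omega
  -- (A''): pattern 3,2,_,_ impossible
  have hA'' : ∀ j : ℕ, c (cyc n j) = 3 → c (cyc n (j + 1)) = 2 → False := by
    intro j h3 h2
    have e1 : c (cyc n (j + 2)) ≠ 2 := fun h =>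
      hkey _ _ 2 1 (cyc_ne h0 one_pos (by omega)) (cyc_edist hn2 1 (j + 1)) h2 h (by omega)
    have e2 : c (cyc n (j + 2)) ≠ 3 := fun h =>
      hkey _ _ 3 2 (cyc_ne h0 two_pos (by omega)) (cyc_edist hn2 2 j) h3 h (by omega)
    have e0 : c (cyc n (j + 2)) = 1 := by have := hcol (cyc n (j + 2)); omega
    have g1 : c (cyc n (j + 3)) ≠ 1 := fun h =>
      hkey _ _ 1 1 (cyc_ne h0 one_pos (by omega)) (cyc_edist hn2 1 (j + 2)) e0 h le_rfl
    have g2 : c (cyc n (j + 3)) ≠ 2 := fun h =>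
      hkey _ _ 2 2 (cyc_ne h0 two_pos (by omega)) (cyc_edist hn2 2 (j + 1)) h2 h le_rfl
    have g3 : c (cyc n (j + 3)) ≠ 3 := fun h =>
      hkey _ _ 3 3 (cyc_ne h0 (by omega) (by omega)) (cyc_edist hn2 3 j) h3 h le_rfl
    have := hcol (cyc n (j + 3)); omega
  -- alternation
  have hstep : ∀ m : ℕ, (c (cyc n (m + 1)) = 1 ↔ ¬ c (cyc n m) = 1) := by
    intro m
    have cm := hcol (cyc n m); have cm1 := hcol (cyc n (m + 1))
    have hne11 : ¬(c (cyc n m) = 1 ∧ c (cyc n (m + 1)) = 1) := by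
      rintro ⟨h1, h2⟩
      exact hkey _ _ 1 1 (cyc_ne h0 one_pos (by omega)) (cyc_edist hn2 1 m) h1 h2 le_rfl
    have hboth : ¬(c (cyc n m) ≠ 1 ∧ c (cyc n (m + 1)) ≠ 1) := by
      rintro ⟨h1, h2⟩
      have hnec : c (cyc n m) ≠ c (cyc n (m + 1)) := fun h =>
        hkey _ _ (c (cyc n m)) 1 (cyc_ne h0 one_pos (by omega)) (cyc_edist hn2 1 m) rfl h.symm
          (by omega)
      by_cases hm2 : c (cyc n m) = 2
      · have hm3 : c (cyc n (m + 1)) = 3 := by omega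
        have r2 : cyc n ((m + 2 * n - 2) + 2) = cyc n m := by
          rw [show (m + 2 * n - 2) + 2 = (m + n) + n from by omega, cyc_add_n h0, cyc_add_n h0]
        have r3 : cyc n ((m + 2 * n - 2) + 3) = cyc n (m + 1) := by
          rw [show (m + 2 * n - 2) + 3 = ((m + 1) + n) + n from by omega, cyc_add_n h0,
            cyc_add_n h0]
        exact hA' (m + 2 * n - 2) (by rw [r2]; exact hm2) (by rw [r3]; exact hm3)
      · have hm3 : c (cyc n m) = 3 := by omega
        have hm2' : c (cyc n (m + 1)) = 2 := by omega
        exact hA'' m hm3 hm2'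
    tauto
  have hpar2 : ∀ (k m : ℕ), (c (cyc n (m + 2 * k)) = 1 ↔ c (cyc n m) = 1) := by
    intro k
    induction k with
    | zero => intro m; norm_num
    | succ k ih =>
      intro m
      rw [show m + 2 * (k + 1) = ((m + 2 * k) + 1) + 1 from by ring, hstep, hstep, ih m]
      tauto
  have hneven : Even n := by
    by_contra hodd'
    rw [Nat.even_iff] at hodd'
    obtain ⟨k, hk⟩ : ∃ k, n = 2 * k + 1 := ⟨n / 2, by omega⟩
    have h1 := hstep (2 * k)
    have h3 : cyc n (2 * k + 1) = cyc n 0 := by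
      rw [show 2 * k + 1 = 0 + n from by omega, cyc_add_n h0]
    rw [h3] at h1
    have h2 := hpar2 k 0
    rw [Nat.zero_add] at h2
    tauto
  have hd_odd : d % 2 = 1 := by
    have h1 := Nat.odd_iff.mp hodd
    obtain ⟨t, ht⟩ := hneven
    omega
  obtain ⟨k, hk⟩ : ∃ k, d = 2 * k + 1 := ⟨d / 2, by omega⟩
  have hd1iff : (c (cyc n d) = 1 ↔ ¬ c (cyc n 0) = 1) := by
    rw [hk, hstep (2 * k), show 2 * k = 0 + 2 * k from (Nat.zero_add _).symm, hpar2 k 0]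
  -- the leaf argument
  have hleaf : ∀ (j : ℕ) (ℓ : Fin (n + 2)), n ≤ ℓ.val →
      (CyclePlusTwoLeaves n d).Adj ℓ (cyc n j) → c (cyc n j) = 1 → False := by
    intro j ℓ hl hadj hc1
    have hlv : ∀ m, ℓ ≠ cyc n m := by
      intro m h
      have h1 := congrArg Fin.val h
      rw [cyc_val h0] at h1
      have := Nat.mod_lt m h0; omega
    have ed_lv : (CyclePlusTwoLeaves n d).edist ℓ (cyc n j) ≤ (1 : ℕ) :=
      le_of_eq (edist_eq_one_iff_adj.mpr hadj)
    have hadj2 : (CyclePlusTwoLeaves n d).Adj (cyc n (j + (n - 1))) (cyc n j) := by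
      have h := cyc_adj (d := d) hn2 (j + (n - 1))
      rwa [show (j + (n - 1)) + 1 = j + n from by omega, cyc_add_n h0] at h
    have ed1 : (CyclePlusTwoLeaves n d).edist (cyc n j) (cyc n (j + 1)) ≤ (1 : ℕ) :=
      cyc_edist hn2 1 j
    have ed2 : (CyclePlusTwoLeaves n d).edist (cyc n j) (cyc n (j + (n - 1))) ≤ (1 : ℕ) :=
      le_of_eq (edist_eq_one_iff_adj.mpr hadj2.symm)
    have edl1 : (CyclePlusTwoLeaves n d).edist ℓ (cyc n (j + 1)) ≤ (2 : ℕ) := by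
      calc (CyclePlusTwoLeaves n d).edist ℓ (cyc n (j + 1))
          ≤ (CyclePlusTwoLeaves n d).edist ℓ (cyc n j) +
            (CyclePlusTwoLeaves n d).edist (cyc n j) (cyc n (j + 1)) :=
            SimpleGraph.edist_triangle
        _ ≤ ((1 : ℕ) : ℕ∞) + ((1 : ℕ) : ℕ∞) := add_le_add ed_lv ed1
        _ = ((2 : ℕ) : ℕ∞) := by norm_num
    have edl2 : (CyclePlusTwoLeaves n d).edist ℓ (cyc n (j + (n - 1))) ≤ (2 : ℕ) := by
      calc (CyclePlusTwoLeaves n d).edist ℓ (cyc n (j + (n - 1)))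
          ≤ (CyclePlusTwoLeaves n d).edist ℓ (cyc n j) +
            (CyclePlusTwoLeaves n d).edist (cyc n j) (cyc n (j + (n - 1))) :=
            SimpleGraph.edist_triangle
        _ ≤ ((1 : ℕ) : ℕ∞) + ((1 : ℕ) : ℕ∞) := add_le_add ed_lv ed2
        _ = ((2 : ℕ) : ℕ∞) := by norm_num
    have edw : (CyclePlusTwoLeaves n d).edist (cyc n (j + 1)) (cyc n (j + (n - 1))) ≤ (2 : ℕ) := by
      calc (CyclePlusTwoLeaves n d).edist (cyc n (j + 1)) (cyc n (j + (n - 1)))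
          ≤ (CyclePlusTwoLeaves n d).edist (cyc n (j + 1)) (cyc n j) +
            (CyclePlusTwoLeaves n d).edist (cyc n j) (cyc n (j + (n - 1))) :=
            SimpleGraph.edist_triangle
        _ ≤ ((1 : ℕ) : ℕ∞) + ((1 : ℕ) : ℕ∞) := by
            refine add_le_add ?_ ed2
            rw [SimpleGraph.edist_comm]; exact ed1
        _ = ((2 : ℕ) : ℕ∞) := by norm_num
    have nw : cyc n (j + 1) ≠ cyc n (j + (n - 1)) := by
      have h := cyc_ne h0 (m := j + 1) (t := n - 2) (by omega) (by omega)
      rwa [show (j + 1) + (n - 2) = j + (n - 1) from by omega] at h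
    have hcl := hcol ℓ; have hc1' := hcol (cyc n (j + 1)); have hc2' := hcol (cyc n (j + (n - 1)))
    have l1 : c ℓ ≠ 1 := fun h => hkey ℓ (cyc n j) 1 1 (hlv j) ed_lv h hc1 le_rfl
    have w1 : c (cyc n (j + 1)) ≠ 1 := fun h =>
      hkey (cyc n j) _ 1 1 (cyc_ne h0 one_pos (by omega)) ed1 hc1 h le_rfl
    have w2 : c (cyc n (j + (n - 1))) ≠ 1 := fun h =>
      hkey (cyc n j) _ 1 1 (cyc_ne h0 (by omega) (by omega)) ed2 hc1 h le_rfl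
    have ww : c (cyc n (j + 1)) ≠ c (cyc n (j + (n - 1))) := fun h =>
      hkey _ _ (c (cyc n (j + 1))) 2 nw edw rfl h.symm (by omega)
    have hor : c ℓ = c (cyc n (j + 1)) ∨ c ℓ = c (cyc n (j + (n - 1))) := by omega
    rcases hor with h | h
    · exact hkey ℓ _ (c ℓ) 2 (hlv _) edl1 rfl h.symm (by omega)
    · exact hkey ℓ _ (c ℓ) 2 (hlv _) edl2 rfl h.symm (by omega)
  by_cases h00 : c (cyc n 0) = 1
  · exact hleaf 0 ⟨n, by omega⟩ (le_refl n) (leaf0_adj hn2) h00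
  · exact hleaf d ⟨n + 1, by omega⟩ (Nat.le_succ n) (leaf1_adj hn2 hdn) (hd1iff.mpr h00)

theorem cyclePlusTwoLeaves_four_le (n d : ℕ) (hn : 4 ≤ n) (hd1 : 1 ≤ d) (hdn : d < n)
    (hodd : Odd (min d (n - d))) :
    4 ≤ packingChromaticNumber (CyclePlusTwoLeaves n d) := by
  have hS : {k | ∃ c : Fin (n + 2) → ℕ,
      IsPackingColoring (CyclePlusTwoLeaves n d) k c}.Nonempty := by
    refine ⟨n + 2, fun v => v.val + 1, ?_, ?_⟩
    · intro v
      refine ⟨?_, ?_⟩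
      · show 1 ≤ v.val + 1; omega
      · show v.val + 1 ≤ n + 2; have := v.isLt; omega
    · intro u v huv heq
      have h : u.val + 1 = v.val + 1 := heq
      exact absurd (Fin.ext (by omega)) huv
  by_contra hlt
  push_neg at hlt
  rw [packingChromaticNumber] at hlt
  obtain ⟨c, hc1, hc2⟩ := Nat.sInf_mem hS
  have h3 : sInf {k | ∃ c : Fin (n + 2) → ℕ,
      IsPackingColoring (CyclePlusTwoLeaves n d) k c} ≤ 3 := by omega
  exact no_three n d hn hd1 hdn hodd c
    (fun v => ⟨(hc1 v).1, le_trans ((hc1 v).2) h3⟩) hc2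
end
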